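/- In the MED setting, each rejection region R_i = {(x₁,…,x_k,y) : min_{i≤j≤k} L_{S,j}(x_j,y) > δ} has level α for H₀ᵢ: for any (p₁,…,p_k,p₀) with min_{j≥i}(p_j−p₀) ≤ δ, P(R_i) ≤ α. -/

import Mathlib

open Finset
open scoped Classical

noncomputable section

/-- Binomial probability mass function `P(X = x)` for `X ~ Bin(n, p)`. -/
def binomPMF (n : ℕ) (p : ℝ) (x : ℕ) : ℝ :=
  (n.choose x : ℝ) * p ^ x * (1 - p) ^ (n - x)

/-- Probability of a set `T` of sample points under independent `X ~ Bin(n,p₁)`, `Y ~ Bin(m,p₀)`. -/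
def prob (n m : ℕ) (p₁ p₀ : ℝ) (T : Finset (ℕ × ℕ)) : ℝ :=
  ∑ z ∈ T, binomPMF n p₁ z.1 * binomPMF m p₀ z.2

/-- The sample space `S = {(x,y) : 0 ≤ x ≤ n, 0 ≤ y ≤ m}`. -/
def sampleSpace (n m : ℕ) : Finset (ℕ × ℕ) :=
  Finset.range (n + 1) ×ˢ Finset.range (m + 1)

/-- The joint sample space for independent `X_i ~ Bin(n_i, p_i)`, `i = 1,…,k`, and
`Y ~ Bin(m, p₀)`. -/
def jointSpace (k : ℕ) (n : Fin k → ℕ) (m : ℕ) : Finset ((Fin k → ℕ) × ℕ) :=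
  (Fintype.piFinset fun i => Finset.range (n i + 1)) ×ˢ Finset.range (m + 1)

/-- Joint probability of a set `T` under independent `X_i ~ Bin(n_i, p_i)` and
`Y ~ Bin(m, p₀)`. -/
def jointProb (k : ℕ) (n : Fin k → ℕ) (m : ℕ) (p : Fin k → ℝ) (p₀ : ℝ)
    (T : Finset ((Fin k → ℕ) × ℕ)) : ℝ :=
  ∑ w ∈ T, (∏ i, binomPMF (n i) (p i) (w.1 i)) * binomPMF m p₀ w.2

/-
Pick `j ≥ i` with `p_j - p₀ ≤ δ`. The rejection region `R_i` lies inside the event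
`{L_{S,j}(X_j, Y) > δ}`, which depends on `(X_j, Y)` alone, so its probability is computed
from the `Bin(n_j, p_j) ⊗ Bin(m, p₀)` marginal. Since `δ ≥ p_j - p₀`, that event misses the
coverage event `{L_{S,j} ≤ p_j - p₀}`, whose probability is at least `1 - α`.
-/

lemma binomPMF_nonneg {n : ℕ} {p : ℝ} (hp : p ∈ Set.Icc (0 : ℝ) 1) (x : ℕ) :
    0 ≤ binomPMF n p x := by
  have : 0 ≤ 1 - p := sub_nonneg.2 hp.2
  have := hp.1
  unfold binomPMF
  positivity

lemma sum_binomPMF (n : ℕ) (p : ℝ) : ∑ x ∈ range (n + 1), binomPMF n p x = 1 := by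
  have h : (p + (1 - p)) ^ n = 1 := by norm_num
  rw [add_pow] at h
  rw [← h]
  refine sum_congr rfl fun x _ => ?_
  unfold binomPMF
  ring

section Prob

variable {n m : ℕ} {p₁ p₀ : ℝ}

lemma prob_sampleSpace : prob n m p₁ p₀ (sampleSpace n m) = 1 := by
  rw [prob, sampleSpace, sum_product, ← sum_mul_sum, sum_binomPMF, sum_binomPMF, mul_one]

lemma prob_filter_not (Q : ℕ × ℕ → Prop) :
    prob n m p₁ p₀ ((sampleSpace n m).filter fun z => ¬ Q z)
      = 1 - prob n m p₁ p₀ ((sampleSpace n m).filter Q) := by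
  rw [eq_sub_iff_add_eq', prob, prob, sum_filter_add_sum_filter_not]
  exact prob_sampleSpace

lemma prob_mono (hp₁ : p₁ ∈ Set.Icc (0 : ℝ) 1) (hp₀ : p₀ ∈ Set.Icc (0 : ℝ) 1)
    {S T : Finset (ℕ × ℕ)} (h : S ⊆ T) :
    prob n m p₁ p₀ S ≤ prob n m p₁ p₀ T :=
  sum_le_sum_of_subset_of_nonneg h fun _ _ _ =>
    mul_nonneg (binomPMF_nonneg hp₁ _) (binomPMF_nonneg hp₀ _)

end Prob

theorem Finset.sum_piFinset_prod_mul_apply {ι β R : Type*} [Fintype ι] [DecidableEq ι]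
    [CommSemiring R] (t : ι → Finset β) (f : ι → β → R) (g : β → R) (j : ι) :
    ∑ x ∈ Fintype.piFinset t, (∏ i, f i (x i)) * g (x j)
      = (∑ v ∈ t j, f j v * g v) * ∏ i ∈ univ.erase j, ∑ v ∈ t i, f i v := by
  set F := Function.update f j fun v => f j v * g v
  have hFj : F j = fun v => f j v * g v := Function.update_self ..
  have hF : ∀ i ∈ univ.erase j, F i = f i := fun i hi =>
    Function.update_of_ne (ne_of_mem_erase hi) _ _
  have hprod : ∀ x : ι → β, (∏ i, f i (x i)) * g (x j) = ∏ i, F i (x i) := by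
    intro x
    rw [← mul_prod_erase univ (fun i => F i (x i)) (mem_univ j),
      ← mul_prod_erase univ (fun i => f i (x i)) (mem_univ j),
      prod_congr rfl fun i hi => congrFun (hF i hi) (x i), hFj]
    ring
  rw [sum_congr rfl fun x _ => hprod x, ← prod_univ_sum, ← mul_prod_erase univ _ (mem_univ j),
    prod_congr rfl fun i hi => by rw [hF i hi], hFj]

section JointProb

variable {k : ℕ} {n : Fin k → ℕ} {m : ℕ} {p : Fin k → ℝ} {p₀ : ℝ}

lemma jointProb_mono (hp : ∀ j, p j ∈ Set.Icc (0 : ℝ) 1) (hp₀ : p₀ ∈ Set.Icc (0 : ℝ) 1)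
    {S T : Finset ((Fin k → ℕ) × ℕ)} (h : S ⊆ T) :
    jointProb k n m p p₀ S ≤ jointProb k n m p p₀ T :=
  sum_le_sum_of_subset_of_nonneg h fun _ _ _ =>
    mul_nonneg (prod_nonneg fun j _ => binomPMF_nonneg (hp j) _) (binomPMF_nonneg hp₀ _)

lemma jointProb_filter_apply (j : Fin k) (Q : ℕ × ℕ → Prop) :
    jointProb k n m p p₀ ((jointSpace k n m).filter fun w => Q (w.1 j, w.2))
      = prob (n j) m (p j) p₀ ((sampleSpace (n j) m).filter Q) := by
  simp only [jointProb, prob, jointSpace, sampleSpace, sum_filter, sum_product]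
  rw [sum_comm, sum_comm (s := range (n j + 1))]
  refine sum_congr rfl fun y _ => ?_
  simp only [← mul_ite_zero]
  rw [sum_piFinset_prod_mul_apply _ (fun i => binomPMF (n i) (p i))
    (fun v => if Q (v, y) then binomPMF m p₀ y else 0),
    prod_eq_one fun i _ => sum_binomPMF (n i) (p i), mul_one]

end JointProb

theorem MED_rejection_level_alpha_general
    (k : ℕ) (n : Fin k → ℕ) (m : ℕ) (α δ : ℝ)
    (LS : Fin k → ℕ × ℕ → ℝ)
    (hcov : ∀ j : Fin k, ∀ p ∈ Set.Icc (0 : ℝ) 1, ∀ p₀ ∈ Set.Icc (0 : ℝ) 1,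
      1 - α ≤ prob (n j) m p p₀
        ((sampleSpace (n j) m).filter (fun z => LS j z ≤ p - p₀)))
    (i : Fin k) :
    ∀ (p : Fin k → ℝ) (p₀ : ℝ), (∀ j, p j ∈ Set.Icc (0 : ℝ) 1) → p₀ ∈ Set.Icc (0 : ℝ) 1 →
      (∃ j : Fin k, i ≤ j ∧ p j - p₀ ≤ δ) →
      jointProb k n m p p₀
        ((jointSpace k n m).filter (fun w => ∀ j : Fin k, i ≤ j → δ < LS j (w.1 j, w.2)))
        ≤ α := by
  rintro p p₀ hp hp₀ ⟨j, hij, hj⟩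
  calc _ ≤ jointProb k n m p p₀ ((jointSpace k n m).filter fun w => δ < LS j (w.1 j, w.2)) :=
        jointProb_mono hp hp₀ (monotone_filter_right _ fun _ _ h => h j hij)
    _ = prob (n j) m (p j) p₀ ((sampleSpace (n j) m).filter fun z => δ < LS j z) :=
        jointProb_filter_apply j fun z => δ < LS j z
    _ ≤ prob (n j) m (p j) p₀ ((sampleSpace (n j) m).filter fun z => ¬ LS j z ≤ p j - p₀) :=
        prob_mono (hp j) hp₀ (monotone_filter_right _ fun _ _ h => not_le.2 (by linarith))
    _ = 1 - prob (n j) m (p j) p₀ ((sampleSpace (n j) m).filter fun z => LS j z ≤ p j - p₀) :=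
        prob_filter_not _
    _ ≤ α := by linarith [hcov j (p j) (hp j) p₀ hp₀]

/-- **Theorem 3, level part.** Each rejection region
`R_i = {(x₁,…,x_k,y) : min_{i ≤ j ≤ k} L_{S,j}(x_j, y) > δ}` has level `α` for
`H₀ᵢ : min_{j ≥ i}(p_j - p₀) ≤ δ`. -/
theorem MED_rejection_level_alpha
    (k : ℕ) (n : Fin k → ℕ) (m : ℕ) (α δ : ℝ) (hα : 0 ≤ α ∧ α < 1) (hδ : 0 ≤ δ)
    (LS : Fin k → ℕ × ℕ → ℝ)
    (hcov : ∀ j : Fin k, ∀ p ∈ Set.Icc (0 : ℝ) 1, ∀ p₀ ∈ Set.Icc (0 : ℝ) 1,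
      1 - α ≤ prob (n j) m p p₀
        ((sampleSpace (n j) m).filter (fun z => LS j z ≤ p - p₀)))
    (i : Fin k) :
    ∀ (p : Fin k → ℝ) (p₀ : ℝ), (∀ j, p j ∈ Set.Icc (0 : ℝ) 1) → p₀ ∈ Set.Icc (0 : ℝ) 1 →
      (∃ j : Fin k, i ≤ j ∧ p j - p₀ ≤ δ) →
      jointProb k n m p p₀
        ((jointSpace k n m).filter (fun w => ∀ j : Fin k, i ≤ j → δ < LS j (w.1 j, w.2)))
        ≤ α :=
  MED_rejection_level_alpha_general k n m α δ LS hcov i
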